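/- Let d ≥ 1, 0 < m ≤ M₂, and 0 < h ≤ 1/4. Let H be a symmetric d×d real matrix with (m/M₂)·I_d ≼ H ≼ I_d. Define the 2d×2d block matrices A = [[I_d − (h(1−e^{−2h})/2)·H, ((1−e^{−2h})/2)·I_d], [−h·e^{−2h}·H, e^{−2h}·I_d]] and S = [[2I_d, I_d], [I_d, I_d]]. Then AᵀSA ≼ (1 − mh/(2M₂))·S. -/

import Mathlib

set_option maxHeartbeats 1000000
open Matrix

-- smul of PSD by nonneg scalar
lemma psd_smul {n : Type*} [Fintype n] {M : Matrix n n ℝ} (hM : M.PosSemidef) {c : ℝ}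
    (hc : 0 ≤ c) : (c • M).PosSemidef := by
  refine Matrix.PosSemidef.of_dotProduct_mulVec_nonneg ?_ ?_
  · unfold Matrix.IsHermitian
    rw [conjTranspose_smul, hM.1]
    simp
  · intro x
    rw [smul_mulVec, dotProduct_smul]
    exact mul_nonneg hc (hM.dotProduct_mulVec_nonneg x)

-- symmetry of quadratic-ish form
lemma psd_symmform {n : Type*} [Fintype n] {K : Matrix n n ℝ} (hK : K.PosSemidef)
    (u v : n → ℝ) : v ⬝ᵥ K *ᵥ u = u ⬝ᵥ K *ᵥ v := by
  have hKt : Kᵀ = K := by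
    have := hK.1
    exact (Matrix.conjTranspose_eq_transpose_of_trivial K).symm.trans this
  rw [dotProduct_mulVec, ← mulVec_transpose, hKt, dotProduct_comm]

lemma psd_cauchy {n : Type*} [Fintype n] {K : Matrix n n ℝ} (hK : K.PosSemidef)
    (u v : n → ℝ) : (u ⬝ᵥ K *ᵥ v) ^ 2 ≤ (u ⬝ᵥ K *ᵥ u) * (v ⬝ᵥ K *ᵥ v) := by
  set a := u ⬝ᵥ K *ᵥ u
  set b := u ⬝ᵥ K *ᵥ v
  set c := v ⬝ᵥ K *ᵥ v
  have key : ∀ t : ℝ, 0 ≤ c * (t * t) + 2 * b * t + a := by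
    intro t
    have h0 := hK.dotProduct_mulVec_nonneg (u + t • v)
    have hvu : v ⬝ᵥ K *ᵥ u = b := psd_symmform hK u v
    simp only [star_trivial, mulVec_add, mulVec_smul, dotProduct_add, add_dotProduct,
      dotProduct_smul, smul_dotProduct, smul_eq_mul] at h0
    rw [hvu] at h0
    nlinarith [h0]
  have hd : discrim c (2*b) a ≤ 0 := discrim_le_zero key
  unfold discrim at hd
  nlinarith [hd]

lemma kron2 {n : Type*} [Fintype n] [DecidableEq n] {K : Matrix n n ℝ} (hK : K.PosSemidef)
    {p q r : ℝ} (hp : 0 ≤ p) (hr : 0 ≤ r) (hq : q ^ 2 ≤ p * r) :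
    (Matrix.fromBlocks (p • K) (q • K) (q • K) (r • K)).PosSemidef := by
  refine Matrix.PosSemidef.of_dotProduct_mulVec_nonneg ?_ ?_
  · have hKt : Kᴴ = K := hK.1
    unfold Matrix.IsHermitian
    have hKt2 : Kᵀ = K := (Matrix.conjTranspose_eq_transpose_of_trivial K).symm.trans hKt
    rw [fromBlocks_conjTranspose]
    simp [conjTranspose_smul, hKt]
    refine ⟨by rw [hKt2], by rw [hKt2], by rw [hKt2]⟩
  · intro x
    have hx : x = Sum.elim (x ∘ Sum.inl) (x ∘ Sum.inr) := (Sum.elim_comp_inl_inr x).symm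
    set u := x ∘ Sum.inl
    set v := x ∘ Sum.inr
    rw [hx]
    rw [star_trivial, fromBlocks_mulVec, sumElim_dotProduct_sumElim]
    simp only [smul_mulVec, dotProduct_add, dotProduct_smul, smul_eq_mul,
      Sum.elim_comp_inl, Sum.elim_comp_inr]
    have hvu : v ⬝ᵥ K *ᵥ u = u ⬝ᵥ K *ᵥ v := psd_symmform hK u v
    rw [hvu]
    have ha := hK.dotProduct_mulVec_nonneg u
    have hc := hK.dotProduct_mulVec_nonneg v
    rw [star_trivial] at ha hc
    have hcs := psd_cauchy hK u v
    set a := u ⬝ᵥ K *ᵥ u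
    set b := u ⬝ᵥ K *ᵥ v
    set c := v ⬝ᵥ K *ᵥ v
    have h1 : (q * b) ^ 2 ≤ (p * r) * (a * c) :=
      mul_le_mul hq hcs (sq_nonneg _) (mul_nonneg hp hr) |>.trans_eq' (by ring)
    have h2 : (2 * (q * b)) ^ 2 ≤ (p * a + r * c) ^ 2 := by
      nlinarith [sq_nonneg (p * a - r * c)]
    have h3 : 0 ≤ p * a + r * c := by positivity
    nlinarith [h2, h3, sq_nonneg (p * a + r * c + 2 * (q * b))]


lemma lemA (h e : ℝ) (hh : 0 < h) (hh' : h ≤ 1/4)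
    (hE1 : (1 - 2*h)^2 ≤ e^2) (hEu : e^2 ≤ 1) :
    e^2*e^2/4 + 3/8 ≤ 3*(1+h)*e^2/2 := by
  nlinarith [hE1, hEu, hh, hh', sq_nonneg (e^2 - 1 + 2*h),
    mul_nonneg (sub_nonneg.2 hE1) (by linarith : (0:ℝ) ≤ 1/4 - h),
    mul_nonneg (sub_nonneg.2 hE1) (sub_nonneg.2 hEu), sq_nonneg (1-2*h), sq_nonneg h]

lemma lemB (h e μ : ℝ) (hh : 0 < h) (hh' : h ≤ 1/4) (hμ0 : 0 < μ) (hμ1 : μ ≤ 1)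
    (hE1 : (1 - 2*h)^2 ≤ e^2) (hEu : e^2 ≤ 1) :
    (3*(1+e^2)/5 - μ/2)^2 ≤ (12/5 - μ - 18*h*(1+e^2)/25) * (2*(1+h)*e^2 - μ/2) := by
  nlinarith [hE1, hEu, hh, hh', hμ0, hμ1, sq_nonneg (e^2 - 1 + 2*h),
    mul_nonneg (sub_nonneg.2 hE1) (by linarith : (0:ℝ) ≤ 1/4 - h),
    mul_nonneg (sub_nonneg.2 hE1) (by linarith : (0:ℝ) ≤ 1 - μ),
    mul_nonneg (sub_nonneg.2 hEu) (by linarith : (0:ℝ) ≤ 1 - μ),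
    mul_nonneg (by linarith : (0:ℝ) ≤ 1 - μ) (by linarith : (0:ℝ) ≤ 1/4 - h),
    sq_nonneg (1 - μ), sq_nonneg (1-2*h), mul_pos hh hμ0]


lemma scalar_facts (h e μ : ℝ) (hh : 0 < h) (hh' : h ≤ 1/4) (he0 : 0 < e)
    (he2 : 1 - 2*h ≤ e) (he3 : e * (1 + 2*h) ≤ 1) (hμ0 : 0 < μ) (hμ1 : μ ≤ 1) :
    (0:ℝ) ≤ (1 - e^2)/2 - μ*h/2 ∧
    (0:ℝ) ≤ μ*h - h^2*((1+e^2)/2)*μ^2 ∧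
    (0:ℝ) ≤ 12*h/5 - μ*h - h^2*((1+e^2)/2)*(36/25) ∧
    (μ*h*e^2/2)^2 ≤ (μ*h - h^2*((1+e^2)/2)*μ^2) * ((1 - e^2)/2 - μ*h/2) ∧
    ((3*h*(1+e^2))/5 - μ*h/2)^2
      ≤ (12*h/5 - μ*h - h^2*((1+e^2)/2)*(36/25)) * ((1 - e^2)/2 - μ*h/2) := by
  have h2h : (0:ℝ) < 1 + 2*h := by linarith
  have hE1 : (1 - 2*h)^2 ≤ e^2 := by nlinarith [he2, he0]
  have hE2 : e^2 * (1 + 2*h)^2 ≤ 1 := by nlinarith [he3, mul_pos he0 h2h]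
  have he1 : e ≤ 1 := by nlinarith [he3, he0, hh]
  have hEu : e^2 ≤ 1 := by nlinarith [he1, he0]
  have hEq : (1:ℝ)/4 ≤ e^2 := by nlinarith [hE1, hh, hh']
  have hrr : h/8 ≤ (1 - e^2)/2 - μ*h/2 := by nlinarith [hE1, hE2, hμ1, hh, hh', hμ0]
  have hr : (0:ℝ) ≤ (1 - e^2)/2 - μ*h/2 := by linarith
  have h1E : 4*h*(1+h)*e^2 ≤ 1 - e^2 := by nlinarith [hE2]
  have hr2 : 2*h*(1+h)*e^2 - μ*h/2 ≤ (1 - e^2)/2 - μ*h/2 := by linarith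
  have ha2 : 0 ≤ 2*h*(1+h)*e^2 - μ*h/2 := by nlinarith [hEq, mul_pos hh hμ0, hμ1]
  have hc1 : (1+e^2)/2 ≤ 1 := by linarith [hEu]
  have hhμ : h*μ ≤ 1/4 := by nlinarith [hμ1, hh, hh', hμ0]
  have step : h^2*((1+e^2)/2)*μ^2 ≤ (h*μ)*(h*μ) := by
    nlinarith [hc1, mul_nonneg hh.le hμ0.le, sq_nonneg (h*μ)]
  have step2 : (h*μ)*(h*μ) ≤ (1/4)*(h*μ) := by nlinarith [hhμ, mul_nonneg hh.le hμ0.le]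
  have hpμ' : μ*h*(3/4) ≤ μ*h - h^2*((1+e^2)/2)*μ^2 := by nlinarith [step, step2]
  have hpμ : (0:ℝ) ≤ μ*h - h^2*((1+e^2)/2)*μ^2 := by nlinarith [hpμ', mul_pos hμ0 hh]
  have hpT : (0:ℝ) ≤ 12*h/5 - μ*h - h^2*((1+e^2)/2)*(36/25) := by
    nlinarith [hμ1, hh, hh', hEu]
  have hmul : (μ*h*(3/4)) * (2*h*(1+h)*e^2 - μ*h/2)
      ≤ (μ*h - h^2*((1+e^2)/2)*μ^2) * ((1 - e^2)/2 - μ*h/2) :=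
    mul_le_mul hpμ' hr2 ha2 (by positivity)
  have hkey : e^2*e^2/4 + 3/8 ≤ 3*(1+h)*e^2/2 := lemA h e hh hh' hE1 hEu
  have t1 : μ*(e^2*e^2/4 + 3/8) ≤ μ*(3*(1+h)*e^2/2) := mul_le_mul_of_nonneg_left hkey hμ0.le
  have t2 : μ^2*(e^2*e^2/4 + 3/8) ≤ μ*(e^2*e^2/4 + 3/8) :=
    mul_le_mul_of_nonneg_right
      (by nlinarith [mul_nonneg hμ0.le (sub_nonneg.2 hμ1)] : μ^2 ≤ μ) (by positivity)
  have t3 : 0 ≤ (3*(1+h)*e^2/2)*μ - μ^2*(e^2*e^2/4 + 3/8) := by linarith [t1, t2]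
  have t4 : 0 ≤ h^2 * ((3*(1+h)*e^2/2)*μ - μ^2*(e^2*e^2/4 + 3/8)) := mul_nonneg (sq_nonneg h) t3
  have hkey2 : (μ*h*e^2/2)^2 ≤ (μ*h*(3/4)) * (2*h*(1+h)*e^2 - μ*h/2) := by linarith [t4]
  have hqμ : (μ*h*e^2/2)^2 ≤ (μ*h - h^2*((1+e^2)/2)*μ^2) * ((1 - e^2)/2 - μ*h/2) :=
    le_trans hkey2 hmul
  have hqT' : (3*(1+e^2)/5 - μ/2)^2
      ≤ (12/5 - μ - 18*h*(1+e^2)/25) * (2*(1+h)*e^2 - μ/2) :=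
    lemB h e μ hh hh' hμ0 hμ1 hE1 hEu
  have u1 : ((3*h*(1+e^2))/5 - μ*h/2)^2
      ≤ (12*h/5 - μ*h - h^2*((1+e^2)/2)*(36/25)) * (2*h*(1+h)*e^2 - μ*h/2) := by
    nlinarith [mul_nonneg (sq_nonneg h) (sub_nonneg.2 hqT')]
  have u2 : (12*h/5 - μ*h - h^2*((1+e^2)/2)*(36/25)) * (2*h*(1+h)*e^2 - μ*h/2)
      ≤ (12*h/5 - μ*h - h^2*((1+e^2)/2)*(36/25)) * ((1 - e^2)/2 - μ*h/2) :=
    mul_le_mul_of_nonneg_left hr2 hpT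
  have hqT : ((3*h*(1+e^2))/5 - μ*h/2)^2
      ≤ (12*h/5 - μ*h - h^2*((1+e^2)/2)*(36/25)) * ((1 - e^2)/2 - μ*h/2) :=
    le_trans u1 u2
  exact ⟨hr, hpμ, hpT, hqμ, hqT⟩

open scoped MatrixOrder in
lemma psd_sqrt_exists {n : Type*} [Fintype n] [DecidableEq n] {M : Matrix n n ℝ}
    (hM : M.PosSemidef) : ∃ R : Matrix n n ℝ, Rᴴ = R ∧ R * R = M :=
  ⟨CFC.sqrt M, (CFC.sqrt_nonneg M).posSemidef.1, CFC.sqrt_mul_sqrt_self M hM.nonneg⟩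

theorem stmt_4 (d : ℕ) (hd : 1 ≤ d) (m M₂ h : ℝ) (hm : 0 < m) (hmM : m ≤ M₂)
    (hh : 0 < h) (hh' : h ≤ 1 / 4)
    (H : Matrix (Fin d) (Fin d) ℝ) (hHsymm : H.IsSymm)
    (hHlow : (H - (m / M₂) • (1 : Matrix (Fin d) (Fin d) ℝ)).PosSemidef)
    (hHup : ((1 : Matrix (Fin d) (Fin d) ℝ) - H).PosSemidef)
    (A S : Matrix (Fin d ⊕ Fin d) (Fin d ⊕ Fin d) ℝ)
    (hA : A = Matrix.fromBlocks
      (1 - (h * (1 - Real.exp (-2 * h)) / 2) • H) (((1 - Real.exp (-2 * h)) / 2) • 1)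
      (-((h * Real.exp (-2 * h)) • H)) (Real.exp (-2 * h) • 1))
    (hS : S = Matrix.fromBlocks ((2 : ℝ) • 1) 1 1 1) :
    ((1 - m * h / (2 * M₂)) • S - Aᵀ * S * A).PosSemidef := by
  have hM2 : 0 < M₂ := lt_of_lt_of_le hm hmM
  set e := Real.exp (-2 * h) with hedef
  have he0 : 0 < e := Real.exp_pos _
  have he2 : 1 - 2 * h ≤ e := by have := Real.add_one_le_exp (-2 * h); linarith
  have he3 : e * (1 + 2 * h) ≤ 1 := by
    have h1 : 1 + 2 * h ≤ Real.exp (2 * h) := by have := Real.add_one_le_exp (2 * h); linarith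
    have h2 : e * Real.exp (2 * h) = 1 := by rw [hedef, ← Real.exp_add]; norm_num
    nlinarith [Real.exp_pos (2 * h)]
  set μ : ℝ := m / M₂ with hμdef
  have hμ0 : 0 < μ := div_pos hm hM2
  have hμ1 : μ ≤ 1 := (div_le_one hM2).2 hmM
  have hδ : m * h / (2 * M₂) = μ * h / 2 := by rw [hμdef]; field_simp
  have hν0 : (0:ℝ) < 6/5 - μ := by linarith
  have hHt : Hᵀ = H := hHsymm
  have hG : (H - μ • 1).PosSemidef := hHlow
  have hF : ((6/5 : ℝ) • 1 - H).PosSemidef := by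
    have h15 : ((1/5 : ℝ) • (1 : Matrix (Fin d) (Fin d) ℝ)).PosSemidef :=
      psd_smul Matrix.PosSemidef.one (by norm_num)
    have heq : (6/5 : ℝ) • (1 : Matrix (Fin d) (Fin d) ℝ) - H = (1 - H) + (1/5 : ℝ) • 1 := by
      module
    rw [heq]; exact hHup.add h15
  obtain ⟨R, hRh, hRsq⟩ := psd_sqrt_exists hG
  have hXpsd : (R * ((6/5 : ℝ) • 1 - H) * R).PosSemidef := by
    have := hF.conjTranspose_mul_mul_same R
    rwa [hRh] at this
  have hX : R * ((6/5 : ℝ) • 1 - H) * R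
      = ((6:ℝ)/5 - μ) • (H - μ • 1) - (H - μ • 1) * (H - μ • 1) := by
    have e1 : (6/5 : ℝ) • (1 : Matrix (Fin d) (Fin d) ℝ) - H
        = ((6:ℝ)/5 - μ) • 1 - (H - μ • 1) := by module
    have e2 : R * (H - μ • 1) * R = (H - μ • 1) * (H - μ • 1) := by
      conv_lhs => rw [← hRsq]
      rw [← hRsq]
      simp only [mul_assoc]
    rw [e1, Matrix.mul_sub, Matrix.sub_mul, mul_smul_comm, smul_mul_assoc, mul_one, hRsq, e2]
  obtain ⟨hr, hpμ, hpT, hqμ, hqT⟩ := scalar_facts h e μ hh hh' he0 he2 he3 hμ0 hμ1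
  have hc0 : (0:ℝ) ≤ ((6:ℝ)/5 - μ) * (h^2*((1+e^2)/2)) :=
    mul_nonneg hν0.le (by positivity)
  -- the key identity
  have key : ((6:ℝ)/5 - μ) • ((1 - m * h / (2 * M₂)) • S - Aᵀ * S * A)
      = fromBlocks ((((6:ℝ)/5 - μ) * (h^2*((1+e^2)/2))) • (R * ((6/5 : ℝ) • 1 - H) * R)) 0 0 0
      + fromBlocks ((μ*h - h^2*((1+e^2)/2)*μ^2) • ((6/5 : ℝ) • 1 - H))
          ((μ*h*e^2/2) • ((6/5 : ℝ) • 1 - H)) ((μ*h*e^2/2) • ((6/5 : ℝ) • 1 - H))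
          (((1 - e^2)/2 - μ*h/2) • ((6/5 : ℝ) • 1 - H))
      + fromBlocks ((12*h/5 - μ*h - h^2*((1+e^2)/2)*(36/25)) • (H - μ • 1))
          (((3*h*(1+e^2))/5 - μ*h/2) • (H - μ • 1)) (((3*h*(1+e^2))/5 - μ*h/2) • (H - μ • 1))
          (((1 - e^2)/2 - μ*h/2) • (H - μ • 1)) := by
    rw [hδ, hA, hS, hX]
    simp only [fromBlocks_transpose, transpose_sub, transpose_add, transpose_smul, transpose_one,
      transpose_neg, hHt, fromBlocks_multiply, sub_eq_add_neg, fromBlocks_neg,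
      fromBlocks_add, fromBlocks_smul]
    rw [Matrix.fromBlocks_inj]
    refine ⟨?_, ?_, ?_, ?_⟩ <;>
    · simp only [Matrix.mul_add, Matrix.add_mul, Matrix.mul_one, Matrix.one_mul,
        Matrix.neg_mul, Matrix.mul_neg, smul_mul_assoc, mul_smul_comm, smul_smul,
        smul_add, smul_neg, smul_sub]
      module
  -- conclude
  have hfin : (1 - m * h / (2 * M₂)) • S - Aᵀ * S * A
      = (((6:ℝ)/5 - μ)⁻¹) • (((6:ℝ)/5 - μ) • ((1 - m * h / (2 * M₂)) • S - Aᵀ * S * A)) := by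
    rw [smul_smul, inv_mul_cancel₀ hν0.ne', one_smul]
  rw [hfin, key]
  refine psd_smul ?_ (by positivity)
  refine PosSemidef.add (PosSemidef.add ?_ ?_) ?_
  · have := kron2 hXpsd hc0 le_rfl (q := 0) (by norm_num)
    simpa using this
  · exact kron2 hF hpμ hr hqμ
  · exact kron2 hG hpT hr hqT
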